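/- Let R = F₁ × ⋯ × F_k be a finite product of finite fields with k ≥ 1. Then χ(complement of Γ(R)) = ω(complement of Γ(R)). -/

import Mathlib

/-- Beck's zero-divisor graph `Γ₀(R)`: vertices are all elements of `R`, and two
distinct vertices `x`, `y` are adjacent iff `x * y = 0`. -/
def gammaZero (R : Type*) [CommRing R] : SimpleGraph R where
  Adj x y := x ≠ y ∧ x * y = 0
  symm := ⟨fun x y ⟨h1, h2⟩ => ⟨h1.symm, by rwa [mul_comm]⟩⟩
  loopless := ⟨fun x ⟨h1, _⟩ => h1 rfl⟩

/-- The set `Z(R) \ {0}` of nonzero zero-divisors of `R`. -/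
def zdStar (R : Type*) [CommRing R] : Set R :=
  {x | x ≠ 0 ∧ ∃ y, y ≠ 0 ∧ x * y = 0}

/-- The Anderson–Livingston zero-divisor graph `Γ(R)`: vertices are the nonzero
zero-divisors of `R`, and two distinct vertices `x`, `y` are adjacent iff `x * y = 0`.
It is the subgraph of `Γ₀(R)` induced on `Z(R) \ {0}`. -/
def gammaGraph (R : Type*) [CommRing R] : SimpleGraph (zdStar R) :=
  (gammaZero R).induce (zdStar R)

/-- The clique number of a graph, as an extended natural number: the least upper
bound of the sizes of (finite) cliques in `G`. -/
noncomputable def cliqueNumE {V : Type*} (G : SimpleGraph V) : ℕ∞ :=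
  ⨆ (s : Finset V) (_ : G.IsClique (s : Set V)), (s.card : ℕ∞)

/-!
A nonzero zero-divisor of `∏ Fᵢ` is a vector whose support is a nonempty proper set of indices,
and two distinct ones are adjacent in the complement of `Γ` exactly when their supports meet.
The number of vectors with support `S` is monotone in `S`. In each complementary pair `{S, Sᶜ}`
call the side carrying more vectors heavy (ties broken by a fixed index `i₀`); by monotonicity no
two heavy sets are disjoint, so the vertices with heavy support form a clique. Mapping the vectors
of support `S` injectively to vectors whose support is the heavy one of `S, Sᶜ` colours the graph
by the vertices of that clique: two vertices of the same colour have equal or complementary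
supports, so they are equal or non-adjacent.
-/

open Finset

theorem Set.exists_injOn_mapsTo_of_ncard_le {α : Type*} [Finite α] {s t : Set α}
    (h : s.ncard ≤ t.ncard) : ∃ f : α → α, s.InjOn f ∧ s.MapsTo f t := by
  classical
  have := Fintype.ofFinite α
  obtain ⟨e⟩ : Nonempty (s ↪ t) := Function.Embedding.nonempty_of_card_le <| by
    simpa only [← Nat.card_eq_fintype_card, Nat.card_coe_set_eq] using h
  refine ⟨fun x => if hx : x ∈ s then e ⟨x, hx⟩ else x, fun x hx y hy hxy => ?_,
    fun x hx => ?_⟩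
  · simp only [dif_pos hx, dif_pos hy] at hxy
    exact congrArg Subtype.val (e.injective (Subtype.ext hxy))
  · simpa only [dif_pos hx] using (e ⟨x, hx⟩).2

theorem cliqueNumE_le_chromaticNumber {V : Type*} (G : SimpleGraph V) :
    cliqueNumE G ≤ G.chromaticNumber :=
  iSup₂_le fun _ hs => hs.card_le_chromaticNumber

theorem SimpleGraph.IsClique.chromaticNumber_eq_cliqueNumE {V : Type*} {G : SimpleGraph V}
    {s : Finset V} (hs : G.IsClique s) (hc : G.Colorable s.card) :
    G.chromaticNumber = cliqueNumE G :=
  le_antisymm (hc.chromaticNumber_le.trans (le_iSup₂_of_le s hs le_rfl))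
    (cliqueNumE_le_chromaticNumber G)

theorem compl_gammaGraph_adj {R : Type*} [CommRing R] {u v : zdStar R} :
    (gammaGraph R)ᶜ.Adj u v ↔ u ≠ v ∧ (u : R) * v ≠ 0 := by
  simp only [SimpleGraph.compl_adj, gammaGraph, SimpleGraph.induce_adj, gammaZero,
    Subtype.coe_ne_coe]
  tauto

section Heavy

variable {ι : Type*} [Fintype ι] [DecidableEq ι] (w : Finset ι → ℕ) (i₀ : ι)

def IsHeavy (S : Finset ι) : Prop :=
  w Sᶜ < w S ∨ (w S = w Sᶜ ∧ i₀ ∈ S)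

theorem exists_isHeavy_le (S : Finset ι) :
    ∃ T, IsHeavy w i₀ T ∧ w S ≤ w T ∧ (T = S ∨ T = Sᶜ) := by
  by_cases hS : IsHeavy w i₀ S
  · exact ⟨S, hS, le_rfl, .inl rfl⟩
  · obtain ⟨hle, htie⟩ : w S ≤ w Sᶜ ∧ (w S = w Sᶜ → i₀ ∉ S) := by
      simpa [IsHeavy] using hS
    refine ⟨Sᶜ, ?_, hle, .inr rfl⟩
    rw [IsHeavy, compl_compl, mem_compl]
    rcases hle.lt_or_eq with h | h
    · exact .inl h
    · exact .inr ⟨h.symm, htie h⟩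

variable {w}

theorem IsHeavy.not_disjoint (hw : Monotone w) {S T : Finset ι} (hS : IsHeavy w i₀ S)
    (hT : IsHeavy w i₀ T) : ¬Disjoint S T := by
  intro hST
  have h₁ : w S ≤ w Tᶜ := hw (le_compl_iff_disjoint_right.mpr hST)
  have h₂ : w T ≤ w Sᶜ := hw (le_compl_iff_disjoint_left.mpr hST)
  rcases hS with hS | ⟨hS, hiS⟩ <;> rcases hT with hT | ⟨hT, hiT⟩ <;>
    first | omega | exact disjoint_left.mp hST hiS hiT

end Heavy

section Pi

variable {ι : Type*} [Fintype ι] {F : ι → Type*} [∀ i, CommRing (F i)]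

noncomputable def piSupport (x : ∀ i, F i) : Finset ι := by
  classical exact univ.filter (x · ≠ 0)

@[simp]
theorem mem_piSupport {x : ∀ i, F i} {i : ι} : i ∈ piSupport x ↔ x i ≠ 0 := by
  simp [piSupport]

theorem piSupport_eq_empty {x : ∀ i, F i} : piSupport x = ∅ ↔ x = 0 := by
  simp [Finset.eq_empty_iff_forall_notMem, funext_iff]

theorem piSupport_single_one [DecidableEq ι] [∀ i, Nontrivial (F i)] (i : ι) :
    piSupport (Pi.single i 1 : ∀ i, F i) = {i} := by
  ext j
  by_cases h : j = i <;> simp [h]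

theorem mul_eq_zero_iff_disjoint_piSupport [∀ i, NoZeroDivisors (F i)] {x y : ∀ i, F i} :
    x * y = 0 ↔ Disjoint (piSupport x) (piSupport y) := by
  simp [disjoint_left, funext_iff, or_iff_not_imp_left]

theorem mem_zdStar_pi_iff [∀ i, IsDomain (F i)] {x : ∀ i, F i} :
    x ∈ zdStar (∀ i, F i) ↔ piSupport x ≠ ∅ ∧ piSupport x ≠ univ := by
  classical
  simp only [zdStar, Set.mem_ofPred_eq, mul_eq_zero_iff_disjoint_piSupport, ne_eq,
    piSupport_eq_empty]
  refine and_congr_right fun _ => ⟨?_, fun hx => ?_⟩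
  · rintro ⟨y, hy, hxy⟩ hx
    rw [hx] at hxy
    exact hy (piSupport_eq_empty.mp (top_disjoint.mp hxy))
  · obtain ⟨i, hi⟩ := (compl_ne_univ_iff_nonempty (piSupport x)ᶜ).mp (by rwa [compl_compl])
    refine ⟨Pi.single i 1, fun h => ?_, ?_⟩
    · simpa using congrFun h i
    · rwa [piSupport_single_one, disjoint_singleton_right, ← mem_compl]

variable (F) in
noncomputable def fiberCard (S : Finset ι) : ℕ :=
  {x : ∀ i, F i | piSupport x = S}.ncard

variable [DecidableEq ι]

theorem fiberCard_mono [∀ i, Finite (F i)] [∀ i, Nontrivial (F i)] :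
    Monotone (fiberCard F) := by
  intro S T hST
  refine Set.ncard_le_ncard_of_injOn (fun x i => if i ∈ T \ S then 1 else x i) ?_ ?_
    (Set.toFinite _)
  · rintro x (rfl : piSupport x = S)
    ext i
    by_cases hi : i ∈ T <;> by_cases hx : x i = 0 <;> simp_all [subset_iff]
  · rintro x (rfl : piSupport x = S) y (hy : piSupport y = piSupport x) hxy
    funext i
    by_cases hi : i ∈ T \ piSupport x
    · have hx : i ∉ piSupport x := (mem_sdiff.mp hi).2
      have hy : i ∉ piSupport y := hy ▸ hx
      simp only [mem_piSupport, not_not] at hx hy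
      rw [hx, hy]
    · simpa [hi] using congrFun hxy i

theorem exists_heavy_fiberwise_injection [∀ i, Finite (F i)] [∀ i, IsDomain (F i)] (i₀ : ι) :
    ∃ φ : (∀ i, F i) → ∀ i, F i,
      (∀ x, IsHeavy (fiberCard F) i₀ (piSupport (φ x))) ∧
      (∀ x, piSupport (φ x) = piSupport x ∨ piSupport (φ x) = (piSupport x)ᶜ) ∧
      ∀ x y, φ x = φ y → x = y ∨ Disjoint (piSupport x) (piSupport y) := by
  have key : ∀ S, ∃ T, (IsHeavy (fiberCard F) i₀ T ∧ (T = S ∨ T = Sᶜ)) ∧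
      ∃ f : (∀ i, F i) → ∀ i, F i, {x | piSupport x = S}.InjOn f ∧
        {x | piSupport x = S}.MapsTo f {x | piSupport x = T} := by
    intro S
    obtain ⟨T, hT, hle, hTS⟩ := exists_isHeavy_le (fiberCard F) i₀ S
    exact ⟨T, ⟨hT, hTS⟩, Set.exists_injOn_mapsTo_of_ncard_le hle⟩
  choose T hT f hinj hmaps using key
  have hsupp x : piSupport (f (piSupport x) x) = T (piSupport x) := hmaps _ rfl
  refine ⟨fun x => f (piSupport x) x, fun x => hsupp x ▸ (hT _).1,
    fun x => hsupp x ▸ (hT _).2, fun x y (hxy : f (piSupport x) x = f (piSupport y) y) => ?_⟩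
  by_cases hS : piSupport x = piSupport y
  · rw [← hS] at hxy
    exact .inl (hinj _ rfl hS.symm hxy)
  · have hTxy : T (piSupport x) = T (piSupport y) := by rw [← hsupp, ← hsupp, hxy]
    rcases (hT (piSupport x)).2 with hx | hx <;> rcases (hT (piSupport y)).2 with hy | hy <;>
      rw [hx, hy] at hTxy
    · exact absurd hTxy hS
    · exact .inr (hTxy ▸ disjoint_compl_left)
    · exact .inr (hTxy.symm ▸ disjoint_compl_right)
    · exact absurd (compl_injective hTxy) hS

variable [∀ i, Finite (F i)]

variable (F) in
noncomputable def heavyVertices (i₀ : ι) : Finset (zdStar (∀ i, F i)) :=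
  (Set.toFinite {v : zdStar (∀ i, F i) |
    IsHeavy (fiberCard F) i₀ (piSupport (v : ∀ i, F i))}).toFinset

variable [∀ i, IsDomain (F i)]

theorem isClique_heavyVertices (i₀ : ι) :
    (gammaGraph (∀ i, F i))ᶜ.IsClique (heavyVertices F i₀ : Set (zdStar (∀ i, F i))) := by
  intro u hu v hv huv
  simp only [heavyVertices, Set.Finite.coe_toFinset, Set.mem_ofPred_eq] at hu hv
  simp only [compl_gammaGraph_adj, ne_eq, mul_eq_zero_iff_disjoint_piSupport]
  exact ⟨huv, hu.not_disjoint i₀ fiberCard_mono hv⟩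

theorem colorable_heavyVertices (i₀ : ι) :
    (gammaGraph (∀ i, F i))ᶜ.Colorable (heavyVertices F i₀).card := by
  obtain ⟨φ, hheavy, hsupp, hfibre⟩ := exists_heavy_fiberwise_injection (F := F) i₀
  have hmem (v : zdStar (∀ i, F i)) : φ v ∈ zdStar (∀ i, F i) := by
    have hv := mem_zdStar_pi_iff.mp v.2
    rw [mem_zdStar_pi_iff]
    rcases hsupp v with h | h <;> rw [h]
    · exact hv
    · simp only [ne_eq, compl_eq_empty_iff, compl_eq_univ_iff]
      exact hv.symm
  let C : (gammaGraph (∀ i, F i))ᶜ.Coloring (heavyVertices F i₀) :=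
    SimpleGraph.Coloring.mk (fun v => ⟨⟨φ v, hmem v⟩, by simp [heavyVertices, hheavy]⟩)
      fun {u v} huv hc => by
        simp only [compl_gammaGraph_adj, ne_eq, mul_eq_zero_iff_disjoint_piSupport] at huv
        have hφ : φ u = φ v := congrArg (fun c : heavyVertices F i₀ => (c.1 : ∀ i, F i)) hc
        rcases hfibre u v hφ with h | h
        · exact huv.1 (Subtype.ext h)
        · exact huv.2 h
  simpa using C.colorable

end Pi

theorem stmt18 (k : ℕ) (hk : 1 ≤ k) (F : Fin k → Type*) [∀ i, Field (F i)]
    [∀ i, Fintype (F i)] :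
    ((gammaGraph (∀ i, F i))ᶜ).chromaticNumber =
      cliqueNumE ((gammaGraph (∀ i, F i))ᶜ) :=
  (isClique_heavyVertices (⟨0, hk⟩ : Fin k)).chromaticNumber_eq_cliqueNumE
    (colorable_heavyVertices _)
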